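/- arXiv:1910.06255 — 8 statements merged into one kernel-verified Lean document; each statement's English description precedes it below -/
import Mathlib

section
/- Let A be a unital Banach algebra over ℂ, let n ≥ 3, let X_1, …, X_n ∈ A and h_1, …, h_n > 0 satisfy ‖X_j‖ ≤ 2h_j, let s > 0 and let r be a positive integer. Assume that for every u ≥ 0, ‖exp(u • X_j)‖ ≤ 1 for each j and ‖exp(u • (X_1 + ⋯ + X_n))‖ ≤ 1. Let F = (1/2)(∏_{j=1}^{n} exp(s • X_j) + ∏_{j=n}^{1} exp(s • X_j)) and λ = Σ_j h_j. Then ‖F^r − exp((r·s) • (X_1 + ⋯ + X_n))‖ ≤ r·[ (8/3)s³ ( λ Σ_j h_j² + (2/3)λ³ ) + (4/3)s⁴ λ⁴ ]. -/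
/-!
Every factor is a contraction, so `F^r - E^r = ∑ F^i (F - E) E^(r-1-i)` gives
`‖F^r - exp(r s H)‖ ≤ r ‖F - exp(s H)‖` with `H = ∑ X_j`, and it remains to bound one step.

The derivatives of `u ↦ ∏ exp(u X_j)` are explicit Leibniz sums of norm at most `B^k`,
`B = ∑ ‖X_j‖`. Expand `F(u) - exp(u H)` by Taylor's formula to fourth order: its derivatives of
order `0, 1, 2` vanish at `0` (the symmetrized product agrees with `exp(u H)` to second order),
the remainder is at most `2 B⁴ s⁴ / 4!`, and the third derivative at `0` is
`½ (c₃(X) + c₃(X reversed)) - H³`, where `c₃` is the third derivative at `0` of the product.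
Peeling off one factor, which enters the product at the front and its reverse at the back, shows
by induction that this has norm at most `2 B Q + (4/3) B³` with `Q = ∑ ‖X_j‖²`. Finally `B ≤ 2λ`
and `Q ≤ 4 ∑ h_j²`.
-/

open NormedSpace

/-- The symmetrized first-order Trotter product
`F(s) = ½(∏_{j=1}^{n} exp(s • X_j) + ∏_{j=n}^{1} exp(s • X_j))`. -/
noncomputable def symTrotter {A : Type*} [NormedRing A] [NormedAlgebra ℂ A]
    [CompleteSpace A] {n : ℕ} (X : Fin n → A) (s : ℝ) : A :=
  (1 / 2 : ℝ) • ((List.ofFn fun j => exp (s • X j)).prod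
    + ((List.ofFn fun j => exp (s • X j)).reverse).prod)

open Finset
open scoped Nat

theorem hasDerivAt_pow_div_factorial_succ (k : ℕ) (u : ℝ) :
    HasDerivAt (fun v : ℝ => v ^ (k + 1) / (k + 1)!) (u ^ k / k !) u := by
  refine ((hasDerivAt_pow (k + 1) u).div_const _).congr_deriv ?_
  rw [Nat.factorial_succ]
  push_cast
  field_simp

theorem norm_sub_taylor_le {E : Type*} [NormedAddCommGroup E] [NormedSpace ℝ E]
    {f : ℕ → ℝ → E} (hf : ∀ k u, HasDerivAt (f k) (f (k + 1) u) u) {m : ℕ} {s C : ℝ}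
    (hC : ∀ u ∈ Set.Icc 0 s, ‖f m u‖ ≤ C) {u : ℝ} (hu : u ∈ Set.Icc 0 s) :
    ‖f 0 u - ∑ k ∈ range m, (u ^ k / k !) • f k 0‖ ≤ C * (u ^ m / m !) := by
  induction m generalizing f u with
  | zero => simpa using hC u hu
  | succ m ih =>
    have hpoly : ∀ v : ℝ, ∑ k ∈ range (m + 1), (v ^ k / k !) • f k 0
        = ∑ k ∈ range m, (v ^ (k + 1) / ((k + 1)! : ℝ)) • f (k + 1) 0 + f 0 0 := fun v => by
      simp [sum_range_succ' _ m]
    have hderiv : ∀ v, HasDerivAt (fun v => f 0 v - ∑ k ∈ range (m + 1), (v ^ k / k !) • f k 0)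
        (f 1 v - ∑ k ∈ range m, (v ^ k / k !) • f (k + 1) 0) v := fun v => by
      simp_rw [hpoly]
      exact (hf 0 v).sub ((HasDerivAt.fun_sum fun k _ =>
        (hasDerivAt_pow_div_factorial_succ k v).smul_const (f (k + 1) 0)).add_const _)
    exact image_norm_le_of_norm_deriv_right_le_deriv_boundary
      (fun v _ => (hderiv v).continuousAt.continuousWithinAt)
      (fun v _ => (hderiv v).hasDerivWithinAt) (by simp [hpoly])
      (fun v => (hasDerivAt_pow_div_factorial_succ m v).const_mul C)
      (fun v hv => ih (f := fun k => f (k + 1)) (fun k => hf (k + 1)) hC ⟨hv.1, hv.2.le⟩) hu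

theorem norm_pow_sub_pow_le {R : Type*} [NormedRing R] [NormOneClass R] {a b : R}
    (ha : ‖a‖ ≤ 1) (hb : ‖b‖ ≤ 1) (r : ℕ) : ‖a ^ r - b ^ r‖ ≤ r * ‖a - b‖ := by
  induction r with
  | zero => simp
  | succ r ih =>
    have hid : a ^ (r + 1) - b ^ (r + 1) = a ^ r * (a - b) + (a ^ r - b ^ r) * b := by
      noncomm_ring
    grw [hid, norm_add_le, norm_mul_le, norm_mul_le, norm_pow_le, ha, hb, ih]
    simp only [one_pow, one_mul, mul_one]
    push_cast
    linarith

theorem norm_list_sum_le {R : Type*} [NormedAddCommGroup R] (l : List R) :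
    ‖l.sum‖ ≤ (l.map norm).sum := by
  simpa using norm_multiset_sum_le (l : Multiset R)

theorem norm_sum_choose_smul_mul_le {R : Type*} [NormedRing R] {f g : ℕ → R} {a b : ℝ}
    (hf : ∀ k, ‖f k‖ ≤ a ^ k) (hg : ∀ k, ‖g k‖ ≤ b ^ k) (k : ℕ) :
    ‖∑ p ∈ antidiagonal k, k.choose p.1 • (f p.1 * g p.2)‖ ≤ (a + b) ^ k := by
  rw [(Commute.all a b).add_pow']
  refine (norm_sum_le _ _).trans (sum_le_sum fun p _ => norm_nsmul_le.trans ?_)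
  rw [nsmul_eq_mul]
  gcongr
  exact (norm_mul_le _ _).trans
    (mul_le_mul (hf _) (hg _) (norm_nonneg _) ((norm_nonneg _).trans (hf _)))

theorem exp_natCast_mul_smul {A : Type*} [NormedRing A] [NormedAlgebra ℝ A] [CompleteSpace A]
    (r : ℕ) (t : ℝ) (x : A) : exp (((r : ℝ) * t) • x) = exp (t • x) ^ r := by
  let : NormedAlgebra ℚ A := NormedAlgebra.restrictScalars ℚ ℝ A
  rw [mul_smul, Nat.cast_smul_eq_nsmul, exp_nsmul]

section ProdExp

variable {A : Type*} [NormedRing A] [NormedAlgebra ℝ A]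

theorem hasDerivAt_leibniz {f g : ℕ → ℝ → A}
    (hf : ∀ k u, HasDerivAt (f k) (f (k + 1) u) u)
    (hg : ∀ k u, HasDerivAt (g k) (g (k + 1) u) u) (k : ℕ) (u : ℝ) :
    HasDerivAt (fun v => ∑ p ∈ antidiagonal k, k.choose p.1 • (f p.1 v * g p.2 v))
      (∑ p ∈ antidiagonal (k + 1), (k + 1).choose p.1 • (f p.1 u * g p.2 u)) u := by
  rw [sum_antidiagonal_choose_succ_nsmul (fun i j => f i u * g j u), add_comm,
    ← sum_add_distrib]
  refine HasDerivAt.fun_sum fun p hp => ?_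
  rw [Nat.choose_symm_of_eq_add (mem_antidiagonal.1 hp).symm, ← smul_add]
  exact ((hf _ u).fun_mul (hg _ u)).const_smul (k.choose p.2)

/-- The `k`-th derivative of `u ↦ ∏_{X ∈ l} exp (u • X)`, by the Leibniz rule. -/
noncomputable def prodExpDeriv : List A → ℕ → ℝ → A
  | [], 0, _ => 1
  | [], _ + 1, _ => 0
  | X :: l, k, u =>
    ∑ p ∈ antidiagonal k, k.choose p.1 • (X ^ p.1 * exp (u • X) * prodExpDeriv l p.2 u)

theorem prodExpDeriv_zero (l : List A) (u : ℝ) :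
    prodExpDeriv l 0 u = (l.map fun X => exp (u • X)).prod := by
  induction l with
  | nil => rfl
  | cons X l ih => simp [prodExpDeriv, ih]

theorem hasDerivAt_pow_mul_exp_smul [CompleteSpace A] (X : A) (k : ℕ) (u : ℝ) :
    HasDerivAt (fun v : ℝ => X ^ k * exp (v • X)) (X ^ (k + 1) * exp (u • X)) u := by
  convert (hasDerivAt_exp_smul_const' X u).const_mul (X ^ k) using 1
  rw [← mul_assoc, pow_succ]

theorem hasDerivAt_prodExpDeriv [CompleteSpace A] (l : List A) (k : ℕ) (u : ℝ) :
    HasDerivAt (prodExpDeriv l k) (prodExpDeriv l (k + 1) u) u := by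
  induction l generalizing k u with
  | nil => cases k <;> exact hasDerivAt_const u _
  | cons X l ih =>
    exact hasDerivAt_leibniz (f := fun k v => X ^ k * exp (v • X))
      (fun k u => hasDerivAt_pow_mul_exp_smul X k u) ih k u

theorem norm_prodExpDeriv_le [NormOneClass A] (l : List A) (u : ℝ)
    (hl : ∀ X ∈ l, ‖exp (u • X)‖ ≤ 1) (k : ℕ) :
    ‖prodExpDeriv l k u‖ ≤ (l.map norm).sum ^ k := by
  induction l generalizing k with
  | nil => cases k <;> simp [prodExpDeriv]
  | cons X l ih =>
    refine norm_sum_choose_smul_mul_le (f := fun k => X ^ k * exp (u • X)) (fun j => ?_)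
      (ih fun Y hY => hl Y (List.mem_cons_of_mem X hY)) k
    grw [norm_mul_le, norm_pow_le, hl X List.mem_cons_self, mul_one]

theorem prodExpDeriv_cons_at_zero (X : A) (l : List A) (k : ℕ) :
    prodExpDeriv (X :: l) k 0
      = ∑ p ∈ antidiagonal k, k.choose p.1 • (X ^ p.1 * prodExpDeriv l p.2 0) := by
  simp [prodExpDeriv]

theorem prodExpDeriv_one_at_zero (l : List A) : prodExpDeriv l 1 0 = l.sum := by
  induction l with
  | nil => rfl
  | cons X l ih =>
    simp [prodExpDeriv_cons_at_zero, Nat.sum_antidiagonal_succ, ih, prodExpDeriv_zero, add_comm]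

theorem prodExpDeriv_cons_two_at_zero (X : A) (l : List A) :
    prodExpDeriv (X :: l) 2 0 = X ^ 2 + 2 • (X * l.sum) + prodExpDeriv l 2 0 := by
  simp [prodExpDeriv_cons_at_zero, Nat.sum_antidiagonal_succ, prodExpDeriv_one_at_zero,
    prodExpDeriv_zero, add_comm, add_left_comm]

theorem prodExpDeriv_cons_three_at_zero (X : A) (l : List A) :
    prodExpDeriv (X :: l) 3 0
      = X ^ 3 + 3 • (X ^ 2 * l.sum) + 3 • (X * prodExpDeriv l 2 0) + prodExpDeriv l 3 0 := by
  simp [prodExpDeriv_cons_at_zero, Nat.sum_antidiagonal_succ, prodExpDeriv_one_at_zero,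
    prodExpDeriv_zero, add_comm, add_left_comm]

theorem prodExpDeriv_concat_two_at_zero (l : List A) (X : A) :
    prodExpDeriv (l ++ [X]) 2 0 = prodExpDeriv l 2 0 + 2 • (l.sum * X) + X ^ 2 := by
  induction l with
  | nil => simp [prodExpDeriv_cons_two_at_zero, prodExpDeriv]
  | cons Y l ih =>
    simp only [List.cons_append, prodExpDeriv_cons_two_at_zero, ih, List.sum_append,
      List.sum_cons, List.sum_nil, add_zero, nsmul_eq_mul, Nat.cast_ofNat]
    noncomm_ring

theorem prodExpDeriv_concat_three_at_zero (l : List A) (X : A) :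
    prodExpDeriv (l ++ [X]) 3 0
      = prodExpDeriv l 3 0 + 3 • (prodExpDeriv l 2 0 * X) + 3 • (l.sum * X ^ 2) + X ^ 3 := by
  induction l with
  | nil => simp [prodExpDeriv_cons_three_at_zero, prodExpDeriv]
  | cons Y l ih =>
    simp only [List.cons_append, prodExpDeriv_cons_three_at_zero, prodExpDeriv_cons_two_at_zero,
      prodExpDeriv_concat_two_at_zero, ih, List.sum_append, List.sum_cons, List.sum_nil,
      add_zero, nsmul_eq_mul, Nat.cast_ofNat]
    noncomm_ring

theorem prodExpDeriv_two_at_zero_add_reverse (l : List A) :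
    prodExpDeriv l 2 0 + prodExpDeriv l.reverse 2 0 = 2 • l.sum ^ 2 := by
  induction l with
  | nil => simp [prodExpDeriv]
  | cons X l ih =>
    rw [List.reverse_cons, prodExpDeriv_concat_two_at_zero, prodExpDeriv_cons_two_at_zero,
      List.sum_reverse, List.sum_cons, eq_sub_of_add_eq' ih]
    simp only [nsmul_eq_mul, Nat.cast_ofNat]
    noncomm_ring

theorem norm_three_smul_prodExpDeriv_two_at_zero_sub_le (l : List A) :
    ‖3 • prodExpDeriv l 2 0 - 2 • l.sum ^ 2‖
      ≤ 3 * (l.map norm).sum ^ 2 - 2 * (l.map (‖·‖ ^ 2)).sum := by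
  induction l with
  | nil => simp [prodExpDeriv]
  | cons X l ih =>
    have hS := norm_list_sum_le l
    have hid : 3 • prodExpDeriv (X :: l) 2 0 - 2 • (X :: l).sum ^ 2
        = (3 • prodExpDeriv l 2 0 - 2 • l.sum ^ 2)
          + (X ^ 2 + 4 • (X * l.sum) - 2 • (l.sum * X)) := by
      rw [prodExpDeriv_cons_two_at_zero, List.sum_cons]
      simp only [nsmul_eq_mul, Nat.cast_ofNat]
      noncomm_ring
    rw [hid]
    grw [norm_add_le, ih, norm_sub_le, norm_add_le, norm_nsmul_le, norm_nsmul_le,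
      norm_pow_le' X two_pos, norm_mul_le, norm_mul_le, hS]
    simp only [List.map_cons, List.sum_cons]
    push_cast
    linarith

theorem norm_prodExpDeriv_three_at_zero_add_reverse_sub_le (l : List A) :
    ‖prodExpDeriv l 3 0 + prodExpDeriv l.reverse 3 0 - 2 • l.sum ^ 3‖
      ≤ 4 * (l.map norm).sum * (l.map (‖·‖ ^ 2)).sum + 8 / 3 * (l.map norm).sum ^ 3 := by
  induction l with
  | nil => simp [prodExpDeriv]
  | cons X l ih =>
    have hD := norm_three_smul_prodExpDeriv_two_at_zero_sub_le l
    have hDr := norm_three_smul_prodExpDeriv_two_at_zero_sub_le l.reverse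
    rw [List.sum_reverse, List.map_reverse, List.sum_reverse, List.map_reverse,
      List.sum_reverse] at hDr
    have hS := norm_list_sum_le l
    set S := l.sum
    set B := (l.map norm).sum
    set Q := (l.map (‖·‖ ^ 2)).sum
    have hid : prodExpDeriv (X :: l) 3 0 + prodExpDeriv (X :: l).reverse 3 0
          - 2 • (X :: l).sum ^ 3
        = (prodExpDeriv l 3 0 + prodExpDeriv l.reverse 3 0 - 2 • S ^ 3)
          + (X ^ 2 * S + S * X ^ 2 - 2 • (X * S * X) - 2 • (S * X * S))
          + X * (3 • prodExpDeriv l 2 0 - 2 • S ^ 2)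
          + (3 • prodExpDeriv l.reverse 2 0 - 2 • S ^ 2) * X := by
      rw [List.reverse_cons, prodExpDeriv_concat_three_at_zero, prodExpDeriv_cons_three_at_zero,
        List.sum_cons, List.sum_reverse]
      simp only [nsmul_eq_mul, Nat.cast_ofNat]
      noncomm_ring
    have hB : 0 ≤ B := (norm_nonneg _).trans hS
    have hQ : 0 ≤ Q := List.sum_nonneg (by simp)
    have hX : 0 ≤ ‖X‖ := norm_nonneg X
    have hSXS : ‖S * X * S‖ ≤ B * ‖X‖ * B := norm_mul₃_le.trans (by gcongr)
    rw [hid]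
    grw [norm_add₄_le, ih, norm_mul_le X, norm_mul_le _ X, hD, hDr, norm_sub_le, norm_sub_le,
      norm_add_le, norm_nsmul_le, norm_nsmul_le, norm_mul_le (X ^ 2), norm_mul_le S (X ^ 2),
      norm_mul₃_le, hSXS, norm_pow_le' X two_pos, hS]
    simp only [List.map_cons, List.sum_cons]
    push_cast
    nlinarith [pow_nonneg hX 3, mul_nonneg hX hQ, mul_nonneg (pow_nonneg hX 2) hB]

/-- The `k`-th derivative of `u ↦ ½ (∏_{X ∈ l} exp (u • X) + ∏_{X ∈ l.reverse} exp (u • X))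
- exp (u • ∑ l)`. -/
noncomputable def symDefectDeriv (l : List A) (k : ℕ) (u : ℝ) : A :=
  (1 / 2 : ℝ) • (prodExpDeriv l k u + prodExpDeriv l.reverse k u) - l.sum ^ k * exp (u • l.sum)

theorem symDefectDeriv_zero (l : List A) (u : ℝ) :
    symDefectDeriv l 0 u = (1 / 2 : ℝ) • ((l.map fun X => exp (u • X)).prod
      + (l.reverse.map fun X => exp (u • X)).prod) - exp (u • l.sum) := by
  simp [symDefectDeriv, prodExpDeriv_zero]

theorem hasDerivAt_symDefectDeriv [CompleteSpace A] (l : List A) (k : ℕ) (u : ℝ) :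
    HasDerivAt (symDefectDeriv l k) (symDefectDeriv l (k + 1) u) u :=
  (((hasDerivAt_prodExpDeriv l k u).add (hasDerivAt_prodExpDeriv l.reverse k u)).const_smul
    (1 / 2 : ℝ)).sub (hasDerivAt_pow_mul_exp_smul l.sum k u)

theorem norm_symDefectDeriv_le [NormOneClass A] (l : List A) {u : ℝ}
    (hl : ∀ X ∈ l, ‖exp (u • X)‖ ≤ 1) (hsum : ‖exp (u • l.sum)‖ ≤ 1) (k : ℕ) :
    ‖symDefectDeriv l k u‖ ≤ 2 * (l.map norm).sum ^ k := by
  have h := norm_prodExpDeriv_le l u hl k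
  have hr := norm_prodExpDeriv_le l.reverse u (fun X hX => hl X (List.mem_reverse.1 hX)) k
  rw [List.map_reverse, List.sum_reverse] at hr
  grw [symDefectDeriv, norm_sub_le, norm_smul, norm_add_le, h, hr, norm_mul_le, norm_pow_le,
    hsum, norm_list_sum_le]
  norm_num
  linarith

theorem symDefectDeriv_at_zero_of_lt_three (l : List A) {k : ℕ} (hk : k < 3) :
    symDefectDeriv l k 0 = 0 := by
  interval_cases k <;>
    simp only [symDefectDeriv, zero_smul, exp_zero, mul_one, pow_zero, pow_one,
      prodExpDeriv_zero, List.map_const', List.prod_replicate, one_pow,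
      prodExpDeriv_one_at_zero, List.sum_reverse, prodExpDeriv_two_at_zero_add_reverse] <;>
    module

theorem norm_symDefectDeriv_three_at_zero_le (l : List A) :
    ‖symDefectDeriv l 3 0‖
      ≤ 2 * (l.map norm).sum * (l.map (‖·‖ ^ 2)).sum + 4 / 3 * (l.map norm).sum ^ 3 := by
  have hK : symDefectDeriv l 3 0
      = (1 / 2 : ℝ) • (prodExpDeriv l 3 0 + prodExpDeriv l.reverse 3 0 - 2 • l.sum ^ 3) := by
    simp only [symDefectDeriv, zero_smul, exp_zero, mul_one]
    module
  rw [hK, norm_smul, Real.norm_of_nonneg (by norm_num)]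
  linarith [norm_prodExpDeriv_three_at_zero_add_reverse_sub_le l]

theorem norm_symmetrized_prod_exp_sub_exp_le [CompleteSpace A] [NormOneClass A] (l : List A)
    {s : ℝ} (hs : 0 ≤ s) (hl : ∀ u : ℝ, 0 ≤ u → ∀ X ∈ l, ‖exp (u • X)‖ ≤ 1)
    (hsum : ∀ u : ℝ, 0 ≤ u → ‖exp (u • l.sum)‖ ≤ 1) :
    ‖(1 / 2 : ℝ) • ((l.map fun X => exp (s • X)).prod + (l.reverse.map fun X => exp (s • X)).prod)
        - exp (s • l.sum)‖
      ≤ s ^ 3 / 6 * (2 * (l.map norm).sum * (l.map (‖·‖ ^ 2)).sum + 4 / 3 * (l.map norm).sum ^ 3)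
        + s ^ 4 / 12 * (l.map norm).sum ^ 4 := by
  have htaylor := norm_sub_taylor_le (hasDerivAt_symDefectDeriv l) (m := 4)
    (fun u hu => norm_symDefectDeriv_le l (hl u hu.1) (hsum u hu.1) 4) ⟨hs, le_rfl⟩
  have hpoly : ∑ k ∈ range 4, (s ^ k / k !) • symDefectDeriv l k 0
      = (s ^ 3 / 6) • symDefectDeriv l 3 0 := by
    norm_num [sum_range_succ, symDefectDeriv_at_zero_of_lt_three, Nat.factorial]
  rw [← symDefectDeriv_zero]
  calc _ ≤ ‖symDefectDeriv l 0 s - ∑ k ∈ range 4, (s ^ k / k !) • symDefectDeriv l k 0‖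
          + ‖(s ^ 3 / 6) • symDefectDeriv l 3 0‖ := by
        rw [← hpoly]
        exact norm_le_norm_sub_add _ _
    _ ≤ 2 * (l.map norm).sum ^ 4 * (s ^ 4 / 4 !) + s ^ 3 / 6
          * (2 * (l.map norm).sum * (l.map (‖·‖ ^ 2)).sum + 4 / 3 * (l.map norm).sum ^ 3) := by
        grw [htaylor, norm_smul, Real.norm_of_nonneg (by positivity),
          norm_symDefectDeriv_three_at_zero_le]
    _ = _ := by
        rw [show ((4 ! : ℕ) : ℝ) = 24 by norm_num [Nat.factorial]]
        ring

end ProdExp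

section Trotter

variable {A : Type*} [NormedRing A] [NormedAlgebra ℂ A] [CompleteSpace A]

theorem symTrotter_eq {n : ℕ} (X : Fin n → A) (s : ℝ) :
    symTrotter X s = (1 / 2 : ℝ) • (((List.ofFn X).map fun Y => exp (s • Y)).prod
      + ((List.ofFn X).reverse.map fun Y => exp (s • Y)).prod) := by
  rw [symTrotter, List.map_reverse, List.map_ofFn]
  rfl

theorem norm_symTrotter_le_one [NormOneClass A] {n : ℕ} (X : Fin n → A) {s : ℝ}
    (hX : ∀ j, ‖exp (s • X j)‖ ≤ 1) : ‖symTrotter X s‖ ≤ 1 := by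
  have hmem : ∀ Y ∈ List.ofFn X, ‖exp (s • Y)‖ ≤ 1 := by
    intro Y hY
    obtain ⟨j, rfl⟩ := List.mem_ofFn.1 hY
    exact hX j
  have h := norm_prodExpDeriv_le _ s hmem 0
  have hr := norm_prodExpDeriv_le _ s (fun Y hY => hmem Y (List.mem_reverse.1 hY)) 0
  rw [prodExpDeriv_zero] at h hr
  grw [symTrotter_eq, norm_smul, norm_add_le, h, hr]
  norm_num

theorem norm_symTrotter_sub_exp_le [NormOneClass A] {n : ℕ} (X : Fin n → A) {s : ℝ}
    (hs : 0 ≤ s) (hX : ∀ u : ℝ, 0 ≤ u → ∀ j, ‖exp (u • X j)‖ ≤ 1)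
    (hsum : ∀ u : ℝ, 0 ≤ u → ‖exp (u • ∑ j, X j)‖ ≤ 1) :
    ‖symTrotter X s - exp (s • ∑ j, X j)‖
      ≤ s ^ 3 / 6 * (2 * (∑ j, ‖X j‖) * (∑ j, ‖X j‖ ^ 2) + 4 / 3 * (∑ j, ‖X j‖) ^ 3)
        + s ^ 4 / 12 * (∑ j, ‖X j‖) ^ 4 := by
  have hmem : ∀ u : ℝ, 0 ≤ u → ∀ Y ∈ List.ofFn X, ‖exp (u • Y)‖ ≤ 1 := by
    intro u hu Y hY
    obtain ⟨j, rfl⟩ := List.mem_ofFn.1 hY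
    exact hX u hu j
  simpa [symTrotter_eq, List.sum_ofFn, List.map_ofFn] using
    norm_symmetrized_prod_exp_sub_exp_le (List.ofFn X) hs hmem (by simpa [List.sum_ofFn] using hsum)

end Trotter

theorem stmt_1_general {A : Type*} [NormedRing A] [NormedAlgebra ℂ A]
    [CompleteSpace A] [NormOneClass A] (n : ℕ)
    (X : Fin n → A) (h : Fin n → ℝ)
    (hX : ∀ j, ‖X j‖ ≤ 2 * h j)
    (s : ℝ) (hs : 0 < s) (r : ℕ)
    (hcon1 : ∀ u : ℝ, 0 ≤ u → ∀ j, ‖exp (u • X j)‖ ≤ 1)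
    (hcon2 : ∀ u : ℝ, 0 ≤ u → ‖exp (u • ∑ j : Fin n, X j)‖ ≤ 1) :
    ‖(symTrotter X s) ^ r - exp (((r : ℝ) * s) • ∑ j : Fin n, X j)‖
      ≤ r * ((8 / 3) * s ^ 3
            * ((∑ j : Fin n, h j) * (∑ j : Fin n, (h j) ^ 2)
                + (2 / 3) * (∑ j : Fin n, h j) ^ 3)
          + (4 / 3) * s ^ 4 * (∑ j : Fin n, h j) ^ 4) := by
  have hB : ∑ j, ‖X j‖ ≤ 2 * ∑ j, h j := by
    rw [mul_sum]
    exact sum_le_sum fun j _ => hX j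
  have hQ : ∑ j, ‖X j‖ ^ 2 ≤ 4 * ∑ j, h j ^ 2 := by
    rw [mul_sum]
    exact sum_le_sum fun j _ => by nlinarith [hX j, norm_nonneg (X j)]
  have hB0 : 0 ≤ ∑ j, ‖X j‖ := by positivity
  rw [exp_natCast_mul_smul]
  calc _ ≤ r * ‖symTrotter X s - exp (s • ∑ j, X j)‖ :=
        norm_pow_sub_pow_le (norm_symTrotter_le_one X (hcon1 s hs.le)) (hcon2 s hs.le) r
    _ ≤ r * (s ^ 3 / 6 * (2 * (2 * ∑ j, h j) * (4 * ∑ j, h j ^ 2) + 4 / 3 * (2 * ∑ j, h j) ^ 3)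
          + s ^ 4 / 12 * (2 * ∑ j, h j) ^ 4) := by
        grw [norm_symTrotter_sub_exp_le X hs.le hcon1 hcon2, hB, hQ]
        linarith
    _ = _ := by ring

/-- Corollary 1 (simulation error of randomized first-order Trotter): with
`λ = Σ_j h_j`,
`‖F^r − exp(r·s • Σ_j X_j)‖ ≤ r·[(8/3)s³(λ Σ_j h_j² + (2/3)λ³) + (4/3)s⁴ λ⁴]`. -/
theorem stmt_1 {A : Type*} [NormedRing A] [NormedAlgebra ℂ A]
    [CompleteSpace A] [NormOneClass A] (n : ℕ) (hn : 3 ≤ n)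
    (X : Fin n → A) (h : Fin n → ℝ) (hpos : ∀ j, 0 < h j)
    (hX : ∀ j, ‖X j‖ ≤ 2 * h j)
    (s : ℝ) (hs : 0 < s) (r : ℕ) (hr : 0 < r)
    (hcon1 : ∀ u : ℝ, 0 ≤ u → ∀ j, ‖exp (u • X j)‖ ≤ 1)
    (hcon2 : ∀ u : ℝ, 0 ≤ u → ‖exp (u • ∑ j : Fin n, X j)‖ ≤ 1) :
    ‖(symTrotter X s) ^ r - exp (((r : ℝ) * s) • ∑ j : Fin n, X j)‖
      ≤ r * ((8 / 3) * s ^ 3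
            * ((∑ j : Fin n, h j) * (∑ j : Fin n, (h j) ^ 2)
                + (2 / 3) * (∑ j : Fin n, h j) ^ 3)
          + (4 / 3) * s ^ 4 * (∑ j : Fin n, h j) ^ 4) :=
  stmt_1_general n X h hX s hs r hcon1 hcon2
end

section
/- Let E be a real Banach space, let (f_k)_{k≥0} be a sequence in E whose power series Σ_k f_k x^k has radius of convergence R, and let 0 < s < R. Define F(θ) = Σ_{k≥0} f_k θ^k for |θ| < R. Let t be a positive integer and M ≥ 0 be such that the t-th derivative of the map θ ↦ F(s·θ) has norm at most M at every point of [0,1]. Then ‖Σ_{k ≥ t} f_k s^k‖ ≤ M / t!. -/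
/-! With `a k = s ^ k • f k`, the map `θ ↦ F (s * θ) = ∑ a k θ ^ k` is analytic on a ball of
radius `R / s > 1`. Subtracting its Taylor polynomial of degree `< t` leaves a function `h` whose
first `t` derivatives vanish at `0` and whose `t`-th derivative is that of `θ ↦ F (s * θ)`.
Integrating the bound `M` on the `t`-th derivative `t` times gives `‖h θ‖ ≤ M θ ^ t / t!` on
`[0, 1]`, and `h 1` is the tail `∑_{k ≥ t} a k`. -/

open Set Nat

namespace FormalMultilinearSeries

section NontriviallyNormed

variable {𝕜 E : Type*} [NontriviallyNormedField 𝕜] [NormedAddCommGroup E] [NormedSpace 𝕜 E]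

variable (𝕜) in
noncomputable def ofCoeff (a : ℕ → E) : FormalMultilinearSeries 𝕜 𝕜 E :=
  fun n => ContinuousMultilinearMap.mkPiRing 𝕜 (Fin n) (a n)

@[simp]
theorem coeff_ofCoeff (a : ℕ → E) (n : ℕ) : (ofCoeff 𝕜 a).coeff n = a n := by
  simp [ofCoeff, coeff]

theorem le_radius_ofCoeff_of_summable {a : ℕ → E} {x : 𝕜}
    (ha : Summable fun k => x ^ k • a k) : (‖x‖₊ : ENNReal) ≤ (ofCoeff 𝕜 a).radius := by
  refine (ofCoeff 𝕜 a).le_radius_of_tendsto (l := 0) ?_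
  simpa [norm_smul, mul_comm] using ha.tendsto_atTop_zero.norm

end NontriviallyNormed

variable {𝕜 E : Type*} [DenselyNormedField 𝕜] [NormedAddCommGroup E] [NormedSpace 𝕜 E]

theorem hasFPowerSeriesOnBall_ofCoeff {a : ℕ → E} {ρ : ℝ} (hρ : 0 < ρ)
    (ha : ∀ x : 𝕜, ‖x‖ < ρ → Summable fun k => x ^ k • a k) :
    HasFPowerSeriesOnBall (fun x => ∑' k, x ^ k • a k) (ofCoeff 𝕜 a) 0 (.ofReal ρ) where
  r_le := by
    refine ENNReal.le_of_forall_nnreal_lt fun q hq => ?_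
    rw [ENNReal.coe_lt_ofReal] at hq
    obtain ⟨x, hqx, hxρ⟩ := NormedField.exists_lt_norm_lt 𝕜 q.2 hq
    exact le_trans (by exact_mod_cast hqx.le) (le_radius_ofCoeff_of_summable (ha x hxρ))
  r_pos := ENNReal.ofReal_pos.2 hρ
  hasSum {y} hy := by
    rw [Metric.eball_ofReal, mem_ball_zero_iff] at hy
    simpa using (ha y hy).hasSum

theorem iteratedDeriv_tsum_pow_smul_zero [CompleteSpace E] {a : ℕ → E} {ρ : ℝ} (hρ : 0 < ρ)
    (ha : ∀ x : 𝕜, ‖x‖ < ρ → Summable fun k => x ^ k • a k) (n : ℕ) :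
    iteratedDeriv n (fun x : 𝕜 => ∑' k, x ^ k • a k) 0 = n ! • a n := by
  rw [iteratedDeriv_eq_iteratedFDeriv,
    ← (hasFPowerSeriesOnBall_ofCoeff hρ ha).factorial_smul 1 n]
  simp

end FormalMultilinearSeries

open FormalMultilinearSeries

section

variable {𝕜 E : Type*} [NontriviallyNormedField 𝕜] [NormedAddCommGroup E] [NormedSpace 𝕜 E]

theorem iteratedDeriv_sum_range_pow_smul (a : ℕ → E) (T n : ℕ) (x : 𝕜) :
    iteratedDeriv n (fun y => ∑ j ∈ Finset.range T, y ^ j • a j) x =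
      ∑ j ∈ Finset.range T, ((j.descFactorial n : 𝕜) * x ^ (j - n)) • a j := by
  rw [iteratedDeriv_fun_sum fun j _ => by fun_prop]
  refine Finset.sum_congr rfl fun j _ => ?_
  rw [iteratedDeriv_smul_const (by fun_prop), iteratedDeriv_pow]

theorem iteratedDeriv_sum_range_pow_smul_of_le (a : ℕ → E) {T n : ℕ} (h : T ≤ n) (x : 𝕜) :
    iteratedDeriv n (fun y => ∑ j ∈ Finset.range T, y ^ j • a j) x = 0 := by
  rw [iteratedDeriv_sum_range_pow_smul]
  refine Finset.sum_eq_zero fun j hj => ?_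
  rw [Nat.descFactorial_eq_zero_iff_lt.2 ((Finset.mem_range.1 hj).trans_le h)]
  simp

theorem iteratedDeriv_sum_range_pow_smul_zero (a : ℕ → E) {T n : ℕ} (h : n < T) :
    iteratedDeriv n (fun y => ∑ j ∈ Finset.range T, y ^ j • a j) (0 : 𝕜) = n ! • a n := by
  rw [iteratedDeriv_sum_range_pow_smul, Finset.sum_eq_single_of_mem n (Finset.mem_range.2 h)]
  · simp [Nat.descFactorial_self, Nat.cast_smul_eq_nsmul]
  · intro j _ hjn
    rcases lt_or_gt_of_ne hjn with hlt | hgt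
    · simp [descFactorial_eq_zero_iff_lt.2 hlt]
    · simp [zero_pow (Nat.sub_ne_zero_of_lt hgt)]

end

section

variable {E : Type*} [NormedAddCommGroup E] [NormedSpace ℝ E]

theorem hasDerivAt_div_factorial_mul_sub_pow (M a x : ℝ) (t : ℕ) :
    HasDerivAt (fun y => M / (t + 1)! * (y - a) ^ (t + 1)) (M / t ! * (x - a) ^ t) x := by
  refine ((((hasDerivAt_id' x).sub_const a).pow (t + 1)).const_mul (M / (t + 1)!)).congr_deriv ?_
  push_cast [Nat.factorial_succ, Nat.add_sub_cancel]
  field_simp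

theorem norm_le_of_iteratedDeriv_eq_zero_of_norm_iteratedDeriv_le {U : Set ℝ} (hU : IsOpen U)
    {a b M : ℝ} (hab : Icc a b ⊆ U) {t : ℕ} {h : ℝ → E} (hh : ContDiffOn ℝ t h U)
    (h0 : ∀ j < t, iteratedDeriv j h a = 0) (hM : ∀ x ∈ Icc a b, ‖iteratedDeriv t h x‖ ≤ M) :
    ∀ x ∈ Icc a b, ‖h x‖ ≤ M / t ! * (x - a) ^ t := by
  induction t generalizing h with
  | zero => simpa using hM
  | succ t ih =>
    have hderiv : ∀ x ∈ U, HasDerivAt h (deriv h x) x := fun x hx =>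
      ((hh.differentiableOn (by simp)) x hx |>.differentiableAt (hU.mem_nhds hx)).hasDerivAt
    have hbound : ∀ x ∈ Icc a b, ‖deriv h x‖ ≤ M / t ! * (x - a) ^ t := by
      refine ih (hh.deriv_of_isOpen hU (by norm_cast)) (fun j hj => ?_) (fun x hx => ?_)
      · rw [← iteratedDeriv_succ']
        exact h0 (j + 1) (by omega)
      · rw [← iteratedDeriv_succ']
        exact hM x hx
    have ha : h a = 0 := by simpa using h0 0 (by omega)
    exact image_norm_le_of_norm_deriv_right_le_deriv_boundary (hh.continuousOn.mono hab)
      (fun x hx => (hderiv x (hab (Ico_subset_Icc_self hx))).hasDerivWithinAt)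
      (by simp [ha]) (hasDerivAt_div_factorial_mul_sub_pow M a · t)
      (fun x hx => hbound x (Ico_subset_Icc_self hx))

theorem Icc_zero_one_subset_ball_zero {ρ : ℝ} (hρ : 1 < ρ) : Icc (0 : ℝ) 1 ⊆ Metric.ball 0 ρ :=
  fun x hx => by
    rw [mem_ball_zero_iff, Real.norm_eq_abs, abs_of_nonneg hx.1]
    exact hx.2.trans_lt hρ

theorem norm_tsum_nat_add_le_of_norm_iteratedDeriv_le [CompleteSpace E] {a : ℕ → E} {ρ : ℝ}
    (hρ : 1 < ρ) (ha : ∀ x : ℝ, ‖x‖ < ρ → Summable fun k => x ^ k • a k) {t : ℕ} {M : ℝ}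
    (hM : ∀ θ ∈ Icc (0 : ℝ) 1, ‖iteratedDeriv t (fun x => ∑' k, x ^ k • a k) θ‖ ≤ M) :
    ‖∑' k, a (k + t)‖ ≤ M / t ! := by
  set S := fun x : ℝ => ∑' k, x ^ k • a k
  set P := fun x : ℝ => ∑ j ∈ Finset.range t, x ^ j • a j
  have hS : ContDiffOn ℝ t S (Metric.ball 0 ρ) := by
    rw [← Metric.eball_ofReal]
    exact (hasFPowerSeriesOnBall_ofCoeff (by linarith) ha).analyticOnNhd.contDiffOn_of_completeSpace
  have hP : ContDiff ℝ t P := by fun_prop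
  have hIcc := Icc_zero_one_subset_ball_zero hρ
  have hSat : ∀ x ∈ Icc (0 : ℝ) 1, ContDiffAt ℝ t S x :=
    fun x hx => hS.contDiffAt (Metric.isOpen_ball.mem_nhds (hIcc hx))
  have htail : (S - P) 1 = ∑' k, a (k + t) := by
    have hsum : Summable a := by simpa using ha 1 (by simpa using hρ)
    simp only [S, P, Pi.sub_apply, one_pow, one_smul]
    rw [← hsum.sum_add_tsum_nat_add t, add_sub_cancel_left]
  have hderiv_zero : ∀ j < t, iteratedDeriv j (S - P) 0 = 0 := fun j hj => by
    rw [iteratedDeriv_sub ((hSat 0 (by simp)).of_le (by norm_cast; omega))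
      (hP.contDiffAt.of_le (by norm_cast; omega)), iteratedDeriv_tsum_pow_smul_zero (by linarith) ha,
      iteratedDeriv_sum_range_pow_smul_zero _ hj, sub_self]
  have hderiv_bound : ∀ x ∈ Icc (0 : ℝ) 1, ‖iteratedDeriv t (S - P) x‖ ≤ M := fun x hx => by
    rw [iteratedDeriv_sub (hSat x hx) hP.contDiffAt,
      iteratedDeriv_sum_range_pow_smul_of_le _ le_rfl, sub_zero]
    exact hM x hx
  rw [← htail]
  simpa using norm_le_of_iteratedDeriv_eq_zero_of_norm_iteratedDeriv_le Metric.isOpen_ball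
    hIcc (hS.sub hP.contDiffOn) hderiv_zero hderiv_bound 1 (by simp)

end

theorem stmt_6_general {E : Type*} [NormedAddCommGroup E] [NormedSpace ℝ E] [CompleteSpace E]
    (f : ℕ → E) (R : ℝ)
    (hconv : ∀ x : ℝ, |x| < R → Summable fun k : ℕ => x ^ k • f k)
    (F : ℝ → E) (hF : ∀ θ : ℝ, |θ| < R → F θ = ∑' k : ℕ, θ ^ k • f k)
    (s : ℝ) (hs : 0 < s) (hsR : s < R)
    (t : ℕ) (M : ℝ)
    (hbound : ∀ θ ∈ Set.Icc (0 : ℝ) 1,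
      ‖iteratedDeriv t (fun θ' => F (s * θ')) θ‖ ≤ M) :
    ‖∑' k : ℕ, s ^ (k + t) • f (k + t)‖ ≤ M / t.factorial := by
  have hρ : 1 < R / s := (one_lt_div hs).2 hsR
  have hscale : ∀ θ : ℝ, ‖θ‖ < R / s → |s * θ| < R := fun θ hθ => by
    rwa [abs_mul, abs_of_pos hs, ← lt_div_iff₀' hs]
  have hpow (θ : ℝ) (k : ℕ) : (s * θ) ^ k • f k = θ ^ k • s ^ k • f k := by
    rw [mul_pow, mul_comm, mul_smul]
  have hsum : ∀ θ : ℝ, ‖θ‖ < R / s → Summable fun k => θ ^ k • s ^ k • f k := fun θ hθ =>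
    (hconv _ (hscale θ hθ)).congr (hpow θ)
  have hEq : EqOn (fun θ => F (s * θ)) (fun θ => ∑' k, θ ^ k • s ^ k • f k)
      (Metric.ball 0 (R / s)) := fun θ hθ => by
    simp only [hF _ (hscale θ (mem_ball_zero_iff.1 hθ)), hpow]
  refine norm_tsum_nat_add_le_of_norm_iteratedDeriv_le hρ hsum fun θ hθ => ?_
  rw [← hEq.iteratedDeriv_of_isOpen Metric.isOpen_ball t (Icc_zero_one_subset_ball_zero hρ hθ)]
  exact hbound θ hθ

/-- The tail bound derived from Lemma 2: if the `t`-th derivative of `θ ↦ F(s·θ)`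
is uniformly bounded by `M` on `[0,1]`, then `‖Σ_{k ≥ t} f_k s^k‖ ≤ M / t!`. -/
theorem stmt_6 {E : Type*} [NormedAddCommGroup E] [NormedSpace ℝ E] [CompleteSpace E]
    (f : ℕ → E) (R : ℝ)
    (hconv : ∀ x : ℝ, |x| < R → Summable fun k : ℕ => x ^ k • f k)
    (F : ℝ → E) (hF : ∀ θ : ℝ, |θ| < R → F θ = ∑' k : ℕ, θ ^ k • f k)
    (s : ℝ) (hs : 0 < s) (hsR : s < R)
    (t : ℕ) (ht : 0 < t) (M : ℝ) (hM : 0 ≤ M)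
    (hbound : ∀ θ ∈ Set.Icc (0 : ℝ) 1,
      ‖iteratedDeriv t (fun θ' => F (s * θ')) θ‖ ≤ M) :
    ‖∑' k : ℕ, s ^ (k + t) • f (k + t)‖ ≤ M / t.factorial :=
  stmt_6_general f R hconv F hF s hs hsR t M hbound
end

section
/- Let A be a unital Banach algebra over ℂ and let X_1, …, X_n ∈ A. Define F : ℝ → A by F(s) = (1/2)(∏_{j=1}^{n} exp(s • X_j) + ∏_{j=n}^{1} exp(s • X_j)). Then F(0) = 1, the first derivative of F at 0 equals Σ_j X_j, and the second derivative of F at 0 equals (Σ_j X_j)². In particular the derivatives of F at 0 up to order two agree with those of s ↦ exp(s • Σ_j X_j). -/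
/-!
By the Leibniz rule, the ordered product `P(t) = ∏ᵢ exp(t • xᵢ)` has `P'(0) = Σᵢ xᵢ` and
`P''(0) = Σᵢ xᵢ² + 2 Σ_{i<j} xᵢ xⱼ`. The reversed product has the same second derivative with each
`xᵢ xⱼ` replaced by `xⱼ xᵢ`, so the two second derivatives add up to `2 (Σᵢ xᵢ)²` and their
average is `(Σᵢ xᵢ)²`, the second derivative of `exp(t • Σᵢ xᵢ)`.
-/

open NormedSpace

theorem iteratedDeriv_two_mul {𝕜 𝔸 : Type*} [NontriviallyNormedField 𝕜] [NormedRing 𝔸]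
    [NormedAlgebra 𝕜 𝔸] {f g : 𝕜 → 𝔸} {x : 𝕜} (hf : ContDiffAt 𝕜 2 f x)
    (hg : ContDiffAt 𝕜 2 g x) :
    iteratedDeriv 2 (f * g) x =
      iteratedDeriv 2 f x * g x + 2 * (deriv f x * deriv g x) + f x * iteratedDeriv 2 g x := by
  rw [iteratedDeriv_mul hf hg]
  norm_num [Finset.sum_range_succ, iteratedDeriv_one]
  noncomm_ring

section ExpSmul

variable {𝕂 𝔸 : Type*} [RCLike 𝕂] [NormedRing 𝔸] [NormedAlgebra 𝕂 𝔸] [CompleteSpace 𝔸]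

theorem iteratedDeriv_exp_smul_const (x : 𝔸) (k : ℕ) :
    iteratedDeriv k (fun t : 𝕂 => exp (t • x)) = fun t => exp (t • x) * x ^ k := by
  induction k with
  | zero => simp
  | succ k ih =>
    funext t
    rw [iteratedDeriv_succ, ih, ((hasDerivAt_exp_smul_const x t).mul_const _).deriv, mul_assoc,
      ← pow_succ']

theorem contDiff_exp_smul_const (x : 𝔸) {n : ℕ∞} : ContDiff 𝕂 n (fun t : 𝕂 => exp (t • x)) :=
  contDiff_of_differentiable_iteratedDeriv fun m _ => by
    rw [iteratedDeriv_exp_smul_const]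
    exact (differentiable_exp_smul_const 𝕂 x).mul_const _

end ExpSmul

section ExpProd

variable {𝕂 𝔸 : Type*} [RCLike 𝕂] [NormedRing 𝔸] [NormedAlgebra 𝕂 𝔸]

variable (𝕂) in
noncomputable def expProd (L : List 𝔸) (t : 𝕂) : 𝔸 :=
  (L.map fun x => exp (t • x)).prod

@[simp]
theorem expProd_nil : expProd 𝕂 ([] : List 𝔸) = 1 :=
  rfl

theorem expProd_cons (x : 𝔸) (L : List 𝔸) :
    expProd 𝕂 (x :: L) = (fun t : 𝕂 => exp (t • x)) * expProd 𝕂 L :=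
  rfl

theorem expProd_append (L M : List 𝔸) : expProd 𝕂 (L ++ M) = expProd 𝕂 L * expProd 𝕂 M := by
  funext t
  simp [expProd]

theorem expProd_reverse_cons (x : 𝔸) (L : List 𝔸) :
    expProd 𝕂 (x :: L).reverse = expProd 𝕂 L.reverse * fun t : 𝕂 => exp (t • x) := by
  rw [List.reverse_cons, expProd_append]
  funext t
  simp [expProd]

@[simp]
theorem expProd_zero (L : List 𝔸) : expProd 𝕂 L 0 = 1 := by
  simp [expProd]

variable [CompleteSpace 𝔸]

theorem contDiff_expProd (L : List 𝔸) {n : ℕ∞} : ContDiff 𝕂 n (expProd 𝕂 L) := by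
  induction L with
  | nil => exact contDiff_const
  | cons x L ih => exact (contDiff_exp_smul_const x).mul ih

theorem deriv_expProd_zero (L : List 𝔸) : deriv (expProd 𝕂 L) 0 = L.sum := by
  induction L with
  | nil => simp
  | cons x L ih =>
    rw [expProd_cons, deriv_mul (differentiableAt_exp_smul_const x 0)
      ((contDiff_expProd L (n := 1)).differentiable one_ne_zero 0), ih,
      (hasDerivAt_exp_smul_const x 0).deriv]
    simp

theorem iteratedDeriv_two_expProd_add_reverse_zero (L : List 𝔸) :
    iteratedDeriv 2 (expProd 𝕂 L) 0 + iteratedDeriv 2 (expProd 𝕂 L.reverse) 0 =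
      2 * L.sum ^ 2 := by
  induction L with
  | nil => simp [Pi.one_def, iteratedDeriv_const]
  | cons x L ih =>
    rw [expProd_reverse_cons, expProd_cons,
      iteratedDeriv_two_mul (contDiff_exp_smul_const x).contDiffAt (contDiff_expProd L).contDiffAt,
      iteratedDeriv_two_mul (contDiff_expProd _).contDiffAt (contDiff_exp_smul_const x).contDiffAt]
    simp only [iteratedDeriv_exp_smul_const, ← iteratedDeriv_one, deriv_expProd_zero,
      List.sum_reverse, zero_smul, exp_zero, expProd_zero, one_mul, mul_one, pow_one,
      List.sum_cons]
    rw [eq_sub_of_add_eq ih]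
    noncomm_ring

theorem iteratedDeriv_expProd_add_reverse_zero (L : List 𝔸) {k : ℕ} (hk : k ≤ 2) :
    iteratedDeriv k (expProd 𝕂 L) 0 + iteratedDeriv k (expProd 𝕂 L.reverse) 0 =
      2 * L.sum ^ k := by
  interval_cases k
  · simp [one_add_one_eq_two]
  · simp [deriv_expProd_zero, two_mul]
  · exact iteratedDeriv_two_expProd_add_reverse_zero L

end ExpProd

theorem symTrotter_eq_smul_expProd_add {A : Type*} [NormedRing A] [NormedAlgebra ℂ A]
    [CompleteSpace A] {n : ℕ} (X : Fin n → A) :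
    symTrotter X =
      (1 / 2 : ℝ) • (expProd ℝ (List.ofFn X) + expProd ℝ (List.ofFn X).reverse) := by
  funext s
  simp [symTrotter, expProd, List.map_ofFn, List.map_reverse, Function.comp_def]

theorem iteratedDeriv_symTrotter_zero {A : Type*} [NormedRing A] [NormedAlgebra ℂ A]
    [CompleteSpace A] {n : ℕ} (X : Fin n → A) {k : ℕ} (hk : k ≤ 2) :
    iteratedDeriv k (symTrotter X) 0 = (∑ j, X j) ^ k := by
  rw [symTrotter_eq_smul_expProd_add, iteratedDeriv_const_smul_field,
    iteratedDeriv_add (contDiff_expProd _).contDiffAt (contDiff_expProd _).contDiffAt,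
    iteratedDeriv_expProd_add_reverse_zero _ hk, List.sum_ofFn, two_mul, ← two_smul ℝ, smul_smul]
  norm_num

theorem stmt_7_general {A : Type*} [NormedRing A] [NormedAlgebra ℂ A]
    [CompleteSpace A] (n : ℕ) (X : Fin n → A) :
    symTrotter X 0 = 1
      ∧ deriv (symTrotter X) 0 = ∑ j : Fin n, X j
      ∧ iteratedDeriv 2 (symTrotter X) 0 = (∑ j : Fin n, X j) ^ 2
      ∧ ∀ k ≤ 2, iteratedDeriv k (symTrotter X) 0
          = iteratedDeriv k (fun s : ℝ => exp (s • ∑ j : Fin n, X j)) 0 := by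
  refine ⟨by simpa using iteratedDeriv_symTrotter_zero X (k := 0) zero_le_two,
    by simpa using iteratedDeriv_symTrotter_zero X (k := 1) one_le_two,
    iteratedDeriv_symTrotter_zero X le_rfl, fun k hk => ?_⟩
  rw [iteratedDeriv_symTrotter_zero X hk, iteratedDeriv_exp_smul_const]
  simp

/-- The symmetrized Trotter product is a second-order approximation of the exponential:
`F(0) = 1`, `F'(0) = Σ_j X_j`, `F''(0) = (Σ_j X_j)²`, so the derivatives of `F` at `0`
up to order two agree with those of `s ↦ exp(s • Σ_j X_j)`. -/
theorem stmt_7 {A : Type*} [NormedRing A] [NormedAlgebra ℂ A]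
    [CompleteSpace A] [NormOneClass A] (n : ℕ) (X : Fin n → A) :
    symTrotter X 0 = 1
      ∧ deriv (symTrotter X) 0 = ∑ j : Fin n, X j
      ∧ iteratedDeriv 2 (symTrotter X) 0 = (∑ j : Fin n, X j) ^ 2
      ∧ ∀ k ≤ 2, iteratedDeriv k (symTrotter X) 0
          = iteratedDeriv k (fun s : ℝ => exp (s • ∑ j : Fin n, X j)) 0 :=
  stmt_7_general n X
end

section
/- Let A be a unital Banach algebra over ℂ, let L_1, …, L_n ∈ A and p_1, …, p_n ∈ (0,1]. With expectation over stochastic sparsification, E[ (Σ_j L̂_j(b))² ] = (Σ_j L_j)² + Σ_j (1/p_j − 1) • L_j². -/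
/-- The weight of a sparsification pattern `b`: `w(b) = ∏_j (if b j then p_j else 1 − p_j)`. -/
noncomputable def sparWeight {n : ℕ} (p : Fin n → ℝ) (b : Fin n → Bool) : ℝ :=
  ∏ j : Fin n, (if b j then p j else 1 - p j)

/-- The sparsified term: `L̂_j(b) = (1/p_j) • L_j` if `b j` and `0` otherwise. -/
noncomputable def sparTerm {A : Type*} [NormedRing A] [NormedAlgebra ℂ A] {n : ℕ}
    (L : Fin n → A) (p : Fin n → ℝ) (b : Fin n → Bool) (j : Fin n) : A :=
  if b j then (1 / p j) • L j else 0

/-- The expectation over sparsification patterns: `E[g] = Σ_b w(b) • g(b)`. -/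
noncomputable def sparExp {A : Type*} [NormedRing A] [NormedAlgebra ℂ A] {n : ℕ}
    (p : Fin n → ℝ) (g : (Fin n → Bool) → A) : A :=
  ∑ b : Fin n → Bool, sparWeight p b • g b

/-- The identity (diff-order2):
`E[(Σ_j L̂_j)²] = (Σ_j L_j)² + Σ_j (1/p_j − 1) • L_j²`. -/
theorem stmt_9 {A : Type*} [NormedRing A] [NormedAlgebra ℂ A]
    [CompleteSpace A] [NormOneClass A] (n : ℕ)
    (L : Fin n → A) (p : Fin n → ℝ) (hp : ∀ j, p j ∈ Set.Ioc (0 : ℝ) 1) :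
    sparExp p (fun b => (∑ j : Fin n, sparTerm L p b j) ^ 2)
      = (∑ j : Fin n, L j) ^ 2
        + ∑ j : Fin n, (1 / p j - 1) • (L j) ^ 2 := by
  have hp0 : ∀ j, p j ≠ 0 := fun j => ne_of_gt (hp j).1
  set c : Fin n → Bool → ℝ := fun j x => if x then 1 / p j else 0 with hc
  -- key scalar expectation
  have key : ∀ i j : Fin n,
      (∑ b : Fin n → Bool, sparWeight p b * (c i (b i) * c j (b j)))
        = if i = j then 1 / p i else 1 := by
    intro i j
    have hrw : ∀ b : Fin n → Bool,
        sparWeight p b * (c i (b i) * c j (b j))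
          = ∏ k : Fin n, ((if b k then p k else 1 - p k)
              * ((if k = i then c i (b k) else 1) * (if k = j then c j (b k) else 1))) := by
      intro b
      rw [Finset.prod_mul_distrib, Finset.prod_mul_distrib, sparWeight]
      congr 1
      rw [Finset.prod_ite_eq' Finset.univ i (fun k => c i (b k)),
          Finset.prod_ite_eq' Finset.univ j (fun k => c j (b k))]
      simp
    simp only [hrw]
    rw [← Fintype.piFinset_univ,
      ← Finset.prod_univ_sum (t := fun _ : Fin n => (Finset.univ : Finset Bool))
        (f := fun k y => (if y then p k else 1 - p k)
          * ((if k = i then c i y else 1) * (if k = j then c j y else 1)))]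
    by_cases hij : i = j
    · subst hij
      rw [if_pos rfl]
      have : ∀ k : Fin n, (∑ x : Bool, ((if x then p k else 1 - p k)
              * ((if k = i then c i x else 1) * (if k = i then c i x else 1))))
          = if k = i then 1 / p i else 1 := by
        intro k
        rw [Fintype.sum_bool]
        by_cases hk : k = i
        · subst hk
          simp [hc]
          field_simp
        · simp [hk]
      rw [Finset.prod_congr rfl (fun k _ => this k)]
      rw [Finset.prod_ite_eq' Finset.univ i (fun _ => 1 / p i)]
      simp
    · rw [if_neg hij]
      apply Finset.prod_eq_one
      intro k _
      rw [Fintype.sum_bool]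
      by_cases hk1 : k = i
      · subst hk1
        rw [if_neg hij]
        simp [hc]
        exact mul_inv_cancel₀ (hp0 k)
      · by_cases hk2 : k = j
        · subst hk2
          simp [hk1, hc]
          exact mul_inv_cancel₀ (hp0 k)
        · simp [hk1, hk2]
  -- rewrite sparTerm
  have hterm : ∀ b j, sparTerm L p b j = c j (b j) • L j := by
    intro b j
    rw [sparTerm, hc]
    cases b j <;> simp
  have hsq : ∀ b : Fin n → Bool,
      (∑ j : Fin n, sparTerm L p b j) ^ 2
        = ∑ i : Fin n, ∑ j : Fin n, (c i (b i) * c j (b j)) • (L i * L j) := by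
    intro b
    simp only [hterm, sq, Finset.sum_mul_sum]
    congr 1; ext i; congr 1; ext j
    rw [smul_mul_smul_comm]
  rw [sparExp]
  simp only [hsq, Finset.smul_sum, smul_smul]
  rw [Finset.sum_comm]
  have hswap : ∀ i : Fin n,
      (∑ b : Fin n → Bool, ∑ j : Fin n, (sparWeight p b * (c i (b i) * c j (b j))) • (L i * L j))
        = ∑ j : Fin n, (if i = j then 1 / p i else 1) • (L i * L j) := by
    intro i
    rw [Finset.sum_comm]
    refine Finset.sum_congr rfl fun j _ => ?_
    rw [← Finset.sum_smul, key i j]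
  simp only [hswap]
  -- now the purely algebraic identity
  have hres : ∀ i j : Fin n, (if i = j then 1 / p i else 1) • (L i * L j)
      = L i * L j + if i = j then (1 / p i - 1) • (L i * L j) else 0 := by
    intro i j
    by_cases hij : i = j
    · simp only [if_pos hij, sub_smul, one_smul]
      abel
    · simp [hij]
  simp only [hres, Finset.sum_add_distrib, Finset.sum_ite_eq]
  simp [sq, Finset.sum_mul_sum]
end

section
/- Let A be a unital Banach algebra over ℂ, let L_1, …, L_n ∈ A, let h_1, …, h_n ≥ 0 satisfy ‖L_j‖ ≤ 2h_j, and let p_1, …, p_n ∈ (0,1]. With expectation over stochastic sparsification, ‖ E[ (Σ_j L̂_j(b))² ] − (Σ_j L_j)² ‖ ≤ 4 Σ_j (1/p_j − 1) h_j². -/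
/-!
Expanding the square, `E[(Σ_j L̂_j)²] = Σ_{j,k} E[c_j c_k] • L_j L_k` with the real coefficients
`c_j(b) = 1_{b_j} / p_j`. The coordinates of `b` are independent Bernoulli variables, so
`E[c_j c_k] = E[c_j] E[c_k] = 1` for `j ≠ k`, while `E[c_j²] = 1 / p_j`. Hence the error is exactly
the diagonal `Σ_j (1/p_j − 1) • L_j²`, and `‖L_j²‖ ≤ (2 h_j)²`.
-/

/-- The rescaled Bernoulli variable `1_{b_j} / p_j`: `L̂_j(b) = sparCoef p_j (b j) • L_j`. -/
noncomputable def sparCoef (q : ℝ) (t : Bool) : ℝ :=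
  if t then 1 / q else 0

section Sparsification

variable {n : ℕ} (p : Fin n → ℝ)

theorem sum_sparWeight_mul_prod (f : Fin n → Bool → ℝ) :
    ∑ b, sparWeight p b * ∏ i, f i (b i) = ∏ i, (p i * f i true + (1 - p i) * f i false) := by
  calc ∑ b, sparWeight p b * ∏ i, f i (b i)
      = ∑ b : Fin n → Bool, ∏ i, (if b i then p i else 1 - p i) * f i (b i) := by
        simp only [sparWeight, Finset.prod_mul_distrib]
    _ = ∏ i, ∑ t, (if t then p i else 1 - p i) * f i t :=
        (Fintype.prod_sum fun i t => (if t then p i else 1 - p i) * f i t).symm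
    _ = _ := by simp

theorem sum_sparWeight_mul_apply (j : Fin n) (u : Bool → ℝ) :
    ∑ b, sparWeight p b * u (b j) = p j * u true + (1 - p j) * u false := by
  have hb (b : Fin n → Bool) : ∏ i, (Pi.mulSingle j u : Fin n → Bool → ℝ) i (b i) = u (b j) := by
    rw [Fintype.prod_eq_single j fun i hi => by simp [hi]]; simp
  have := sum_sparWeight_mul_prod p (Pi.mulSingle j u)
  rw [Fintype.prod_eq_single j fun i hi => by simp [hi]] at this
  simp only [hb] at this
  simpa using this

theorem sum_sparWeight_mul_apply_mul_apply {j k : Fin n} (hjk : j ≠ k) (u v : Bool → ℝ) :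
    ∑ b, sparWeight p b * (u (b j) * v (b k))
      = (p j * u true + (1 - p j) * u false) * (p k * v true + (1 - p k) * v false) := by
  have hb (b : Fin n → Bool) :
      ∏ i, (Pi.mulSingle j u * Pi.mulSingle k v : Fin n → Bool → ℝ) i (b i) = u (b j) * v (b k) := by
    rw [Fintype.prod_eq_mul j k hjk fun i hi => by simp [hi.1, hi.2]]; simp [hjk, hjk.symm]
  have := sum_sparWeight_mul_prod p (Pi.mulSingle j u * Pi.mulSingle k v)
  rw [Fintype.prod_eq_mul j k hjk fun i hi => by simp [hi.1, hi.2]] at this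
  simp only [hb] at this
  simpa [hjk, hjk.symm] using this

theorem sum_sparWeight_mul_sparCoef_mul (hp : ∀ i, p i ≠ 0) (j k : Fin n) :
    ∑ b, sparWeight p b * (sparCoef (p j) (b j) * sparCoef (p k) (b k))
      = if j = k then 1 / p j else 1 := by
  by_cases hjk : j = k
  · subst hjk
    rw [sum_sparWeight_mul_apply p j fun t => sparCoef (p j) t * sparCoef (p j) t]
    simp only [sparCoef, if_true, Bool.false_eq_true, if_false, mul_zero, add_zero]
    field_simp [hp j]
  · rw [sum_sparWeight_mul_apply_mul_apply p hjk]
    simp [sparCoef, hp j, hp k, hjk]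

variable {A : Type*} [NormedRing A] [NormedAlgebra ℂ A]

theorem sparExp_sum {ι : Type*} (s : Finset ι) (g : ι → (Fin n → Bool) → A) :
    sparExp p (fun b => ∑ i ∈ s, g i b) = ∑ i ∈ s, sparExp p (g i) := by
  simp only [sparExp, Finset.smul_sum]
  exact Finset.sum_comm

theorem sparExp_smul_const (c : (Fin n → Bool) → ℝ) (x : A) :
    sparExp p (fun b => c b • x) = (∑ b, sparWeight p b * c b) • x := by
  simp only [sparExp, smul_smul, Finset.sum_smul]

theorem sparTerm_eq_sparCoef_smul (L : Fin n → A) (b : Fin n → Bool) (j : Fin n) :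
    sparTerm L p b j = sparCoef (p j) (b j) • L j := by
  unfold sparTerm sparCoef
  split_ifs <;> simp

theorem sparExp_sparTerm_mul (hp : ∀ i, p i ≠ 0) (L : Fin n → A) (j k : Fin n) :
    sparExp p (fun b => sparTerm L p b j * sparTerm L p b k)
      = (if j = k then 1 / p j else 1) • (L j * L k) := by
  simp only [sparTerm_eq_sparCoef_smul, smul_mul_smul_comm, sparExp_smul_const,
    sum_sparWeight_mul_sparCoef_mul p hp]

theorem sparExp_sq_sum_sparTerm_sub (hp : ∀ i, p i ≠ 0) (L : Fin n → A) :
    sparExp p (fun b => (∑ j, sparTerm L p b j) ^ 2) - (∑ j, L j) ^ 2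
      = ∑ j, (1 / p j - 1) • (L j * L j) := by
  simp only [sq, Finset.sum_mul_sum, sparExp_sum, sparExp_sparTerm_mul p hp,
    ← Finset.sum_sub_distrib]
  refine Finset.sum_congr rfl fun j _ => ?_
  rw [Finset.sum_eq_single j (fun k _ hkj => by simp [Ne.symm hkj]) (by simp)]
  simp [sub_smul]

end Sparsification

theorem norm_smul_mul_self_le {R : Type*} [SeminormedRing R] [NormedSpace ℝ R] (c : ℝ) {x : R}
    {r : ℝ} (hx : ‖x‖ ≤ r) : ‖c • (x * x)‖ ≤ |c| * r ^ 2 := by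
  rw [norm_smul, Real.norm_eq_abs, sq]
  gcongr
  exact (norm_mul_le x x).trans (mul_le_mul hx hx (norm_nonneg x) ((norm_nonneg x).trans hx))

theorem stmt_10_general {A : Type*} [NormedRing A] [NormedAlgebra ℂ A] (n : ℕ)
    (L : Fin n → A) (h : Fin n → ℝ)
    (hL : ∀ j, ‖L j‖ ≤ 2 * h j)
    (p : Fin n → ℝ) (hp : ∀ j, p j ∈ Set.Ioc (0 : ℝ) 1) :
    ‖sparExp p (fun b => (∑ j : Fin n, sparTerm L p b j) ^ 2)
        - (∑ j : Fin n, L j) ^ 2‖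
      ≤ 4 * ∑ j : Fin n, (1 / p j - 1) * (h j) ^ 2 := by
  rw [sparExp_sq_sum_sparTerm_sub p (fun j => (hp j).1.ne') L, Finset.mul_sum]
  refine (norm_sum_le _ _).trans (Finset.sum_le_sum fun j _ => ?_)
  have hcoef : 0 ≤ 1 / p j - 1 := sub_nonneg.2 (one_le_one_div (hp j).1 (hp j).2)
  calc ‖(1 / p j - 1) • (L j * L j)‖ ≤ |1 / p j - 1| * (2 * h j) ^ 2 :=
        norm_smul_mul_self_le _ (hL j)
    _ = 4 * ((1 / p j - 1) * h j ^ 2) := by rw [abs_of_nonneg hcoef]; ring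

/-- The second-order error bound (ε₁ of Theorem 1):
`‖E[(Σ_j L̂_j)²] − (Σ_j L_j)²‖ ≤ 4 Σ_j (1/p_j − 1) h_j²`. -/
theorem stmt_10 {A : Type*} [NormedRing A] [NormedAlgebra ℂ A]
    [CompleteSpace A] [NormOneClass A] (n : ℕ)
    (L : Fin n → A) (h : Fin n → ℝ) (hnn : ∀ j, 0 ≤ h j)
    (hL : ∀ j, ‖L j‖ ≤ 2 * h j)
    (p : Fin n → ℝ) (hp : ∀ j, p j ∈ Set.Ioc (0 : ℝ) 1) :
    ‖sparExp p (fun b => (∑ j : Fin n, sparTerm L p b j) ^ 2)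
        - (∑ j : Fin n, L j) ^ 2‖
      ≤ 4 * ∑ j : Fin n, (1 / p j - 1) * (h j) ^ 2 :=
  stmt_10_general n L h hL p hp
end

section
/- Let R be a (not necessarily commutative) ring and let L_1, …, L_n ∈ R. Then Σ_{k<j<l} L_j L_k L_l + Σ_{k<l<j} L_j L_k L_l + Σ_{j<l<k} L_j L_k L_l + Σ_{l<j<k} L_j L_k L_l − 2 Σ_{j<k<l} L_j L_k L_l − 2 Σ_{l<k<j} L_j L_k L_l = Σ_{1 ≤ j < k < l ≤ n} ( ⁅L_l, ⁅L_j, L_k⁆⁆ + ⁅⁅L_k, L_l⁆, L_j⁆ ), where in each sum on the left the indices j, k, l range over {1, …, n} subject to the indicated strict ordering, and ⁅x, y⁆ = x y − y x denotes the commutator. -/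
section aux
variable {R : Type*} [Ring R] {n : ℕ}

private lemma swap12 (f : Fin n → Fin n → Fin n → R) :
    ∑ j : Fin n, ∑ k : Fin n, ∑ l : Fin n, f j k l
      = ∑ j : Fin n, ∑ k : Fin n, ∑ l : Fin n, f k j l :=
  Finset.sum_comm

private lemma swap23 (f : Fin n → Fin n → Fin n → R) :
    ∑ j : Fin n, ∑ k : Fin n, ∑ l : Fin n, f j k l
      = ∑ j : Fin n, ∑ k : Fin n, ∑ l : Fin n, f j l k :=
  Finset.sum_congr rfl fun _ _ => Finset.sum_comm

end aux

/-- The `D₅` identity: the combination of ordered triple products collapses to a sum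
of nested commutators over increasing triples. Here `⁅x, y⁆ = x*y - y*x`. -/
theorem stmt_12 {R : Type*} [Ring R] (n : ℕ) (L : Fin n → R) :
    (∑ j : Fin n, ∑ k : Fin n, ∑ l : Fin n,
        (if k < j ∧ j < l then L j * L k * L l else 0))
    + (∑ j : Fin n, ∑ k : Fin n, ∑ l : Fin n,
        (if k < l ∧ l < j then L j * L k * L l else 0))
    + (∑ j : Fin n, ∑ k : Fin n, ∑ l : Fin n,
        (if j < l ∧ l < k then L j * L k * L l else 0))
    + (∑ j : Fin n, ∑ k : Fin n, ∑ l : Fin n,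
        (if l < j ∧ j < k then L j * L k * L l else 0))
    - 2 * (∑ j : Fin n, ∑ k : Fin n, ∑ l : Fin n,
        (if j < k ∧ k < l then L j * L k * L l else 0))
    - 2 * (∑ j : Fin n, ∑ k : Fin n, ∑ l : Fin n,
        (if l < k ∧ k < j then L j * L k * L l else 0))
    = ∑ j : Fin n, ∑ k : Fin n, ∑ l : Fin n,
        (if j < k ∧ k < l then ⁅L l, ⁅L j, L k⁆⁆ + ⁅⁅L k, L l⁆, L j⁆ else 0) := by
  have h1 : (∑ j : Fin n, ∑ k : Fin n, ∑ l : Fin n,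
        (if k < j ∧ j < l then L j * L k * L l else 0))
      = ∑ j : Fin n, ∑ k : Fin n, ∑ l : Fin n,
        (if j < k ∧ k < l then L k * L j * L l else 0) :=
    swap12 (fun j k l => if k < j ∧ j < l then L j * L k * L l else 0)
  have h2 : (∑ j : Fin n, ∑ k : Fin n, ∑ l : Fin n,
        (if k < l ∧ l < j then L j * L k * L l else 0))
      = ∑ j : Fin n, ∑ k : Fin n, ∑ l : Fin n,
        (if j < k ∧ k < l then L l * L j * L k else 0) := by
    rw [swap12 (fun j k l => if k < l ∧ l < j then L j * L k * L l else 0),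
        swap23 (fun j k l => if j < l ∧ l < k then L k * L j * L l else 0)]
  have h3 : (∑ j : Fin n, ∑ k : Fin n, ∑ l : Fin n,
        (if j < l ∧ l < k then L j * L k * L l else 0))
      = ∑ j : Fin n, ∑ k : Fin n, ∑ l : Fin n,
        (if j < k ∧ k < l then L j * L l * L k else 0) :=
    swap23 (fun j k l => if j < l ∧ l < k then L j * L k * L l else 0)
  have h4 : (∑ j : Fin n, ∑ k : Fin n, ∑ l : Fin n,
        (if l < j ∧ j < k then L j * L k * L l else 0))
      = ∑ j : Fin n, ∑ k : Fin n, ∑ l : Fin n,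
        (if j < k ∧ k < l then L k * L l * L j else 0) := by
    rw [swap23 (fun j k l => if l < j ∧ j < k then L j * L k * L l else 0),
        swap12 (fun j k l => if k < j ∧ j < l then L j * L l * L k else 0)]
  have h6 : (∑ j : Fin n, ∑ k : Fin n, ∑ l : Fin n,
        (if l < k ∧ k < j then L j * L k * L l else 0))
      = ∑ j : Fin n, ∑ k : Fin n, ∑ l : Fin n,
        (if j < k ∧ k < l then L l * L k * L j else 0) := by
    rw [swap12 (fun j k l => if l < k ∧ k < j then L j * L k * L l else 0),
        swap23 (fun j k l => if l < j ∧ j < k then L k * L j * L l else 0),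
        swap12 (fun j k l => if k < j ∧ j < l then L l * L j * L k else 0)]
  rw [h1, h2, h3, h4, h6]
  simp only [Finset.mul_sum, ← Finset.sum_add_distrib, ← Finset.sum_sub_distrib]
  refine Finset.sum_congr rfl fun j _ => Finset.sum_congr rfl fun k _ =>
    Finset.sum_congr rfl fun l _ => ?_
  split_ifs with h
  · simp only [Ring.lie_def]; noncomm_ring
  · simp
end

section
/- Let A be a unital Banach algebra over ℂ and let X ∈ A be such that ‖exp(θ • X)‖ ≤ 1 for every θ ∈ [0,1]. Then ‖ exp(X) − Σ_{k=0}^{3} X^k / k! ‖ ≤ ‖X‖⁴ / 24. -/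
/-!
The Taylor remainder `R n t = exp (t • X) - ∑ k < n, (t ^ k / k!) • X ^ k` satisfies
`R (n + 1) 0 = 0` and `(R (n + 1))' = X * R n`. Starting from the contraction hypothesis
`‖R 0 t‖ ≤ 1` on `[0, 1]`, the mean value inequality gives inductively
`‖R n t‖ ≤ ‖X‖ ^ n * t ^ n / n!`; take `n = 4`, `t = 1`.
-/

open NormedSpace Finset

lemma hasDerivAt_pow_succ_div_factorial (k : ℕ) (t : ℝ) :
    HasDerivAt (fun u : ℝ => u ^ (k + 1) / (k + 1).factorial) (t ^ k / k.factorial) t := by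
  refine ((hasDerivAt_pow (k + 1) t).div_const ((k + 1).factorial : ℝ)).congr_deriv ?_
  rw [Nat.factorial_succ, Nat.cast_mul, Nat.add_sub_cancel, mul_div_mul_left]
  positivity

section

variable {A : Type*} [NormedRing A] [NormedAlgebra ℝ A]

noncomputable def expTaylorRemainder (X : A) (n : ℕ) (t : ℝ) : A :=
  exp (t • X) - ∑ k ∈ range n, (t ^ k / k.factorial) • X ^ k

lemma expTaylorRemainder_succ_zero (X : A) (n : ℕ) : expTaylorRemainder X (n + 1) 0 = 0 := by
  simp [expTaylorRemainder, sum_range_succ']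

lemma hasDerivAt_sum_pow_div_factorial_smul (X : A) (n : ℕ) (t : ℝ) :
    HasDerivAt (fun u : ℝ => ∑ k ∈ range (n + 1), (u ^ k / k.factorial) • X ^ k)
      (X * ∑ k ∈ range n, (t ^ k / k.factorial) • X ^ k) t := by
  simp only [sum_range_succ' _ n, pow_zero, Nat.factorial_zero, Nat.cast_one, div_one, one_smul]
  have hterms := HasDerivAt.fun_sum fun k (_ : k ∈ range n) =>
    (hasDerivAt_pow_succ_div_factorial k t).smul_const (X ^ (k + 1))
  refine (hterms.add_const (1 : A)).congr_deriv ?_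
  simp only [mul_sum, mul_smul_comm, pow_succ']

lemma hasDerivAt_expTaylorRemainder_succ [CompleteSpace A] (X : A) (n : ℕ) (t : ℝ) :
    HasDerivAt (expTaylorRemainder X (n + 1)) (X * expTaylorRemainder X n t) t := by
  rw [expTaylorRemainder, mul_sub]
  exact (hasDerivAt_exp_smul_const' X t).sub (hasDerivAt_sum_pow_div_factorial_smul X n t)

lemma norm_expTaylorRemainder_le [CompleteSpace A] {X : A} {T : ℝ}
    (hX : ∀ θ ∈ Set.Icc 0 T, ‖exp (θ • X)‖ ≤ 1) (n : ℕ) :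
    ∀ θ ∈ Set.Icc 0 T, ‖expTaylorRemainder X n θ‖ ≤ ‖X‖ ^ n * (θ ^ n / n.factorial) := by
  induction n with
  | zero => simpa [expTaylorRemainder] using hX
  | succ n ih =>
    refine image_norm_le_of_norm_deriv_right_le_deriv_boundary
      (fun t _ => (hasDerivAt_expTaylorRemainder_succ X n t).continuousAt.continuousWithinAt)
      (fun t _ => (hasDerivAt_expTaylorRemainder_succ X n t).hasDerivWithinAt)
      (by simp [expTaylorRemainder_succ_zero])
      (fun t => (hasDerivAt_pow_succ_div_factorial n t).const_mul (‖X‖ ^ (n + 1))) ?_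
    intro t ht
    calc ‖X * expTaylorRemainder X n t‖
        ≤ ‖X‖ * (‖X‖ ^ n * (t ^ n / n.factorial)) :=
          (norm_mul_le _ _).trans (by gcongr; exact ih t (Set.Ico_subset_Icc_self ht))
      _ = ‖X‖ ^ (n + 1) * (t ^ n / n.factorial) := by ring

end

theorem stmt_16_general {A : Type*} [NormedRing A] [NormedAlgebra ℂ A]
    [CompleteSpace A] (X : A)
    (hX : ∀ θ ∈ Set.Icc (0 : ℝ) 1, ‖exp (θ • X)‖ ≤ 1) :
    ‖exp X - ∑ k ∈ Finset.range 4, ((k.factorial : ℝ))⁻¹ • X ^ k‖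
      ≤ ‖X‖ ^ 4 / 24 := by
  have h := norm_expTaylorRemainder_le hX 4 1 ⟨zero_le_one, le_rfl⟩
  simp only [expTaylorRemainder, one_pow, one_smul, one_div] at h
  norm_num [Nat.factorial] at h ⊢
  simpa [div_eq_mul_inv] using h

/-- Tail bound on the ideal evolution: if `exp(θ • X)` is a contraction for all
`θ ∈ [0,1]`, then the degree-≥4 tail of `exp X` is bounded by `‖X‖⁴ / 4!`. -/
theorem stmt_16 {A : Type*} [NormedRing A] [NormedAlgebra ℂ A]
    [CompleteSpace A] [NormOneClass A] (X : A)
    (hX : ∀ θ ∈ Set.Icc (0 : ℝ) 1, ‖exp (θ • X)‖ ≤ 1) :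
    ‖exp X - ∑ k ∈ Finset.range 4, ((k.factorial : ℝ))⁻¹ • X ^ k‖
      ≤ ‖X‖ ^ 4 / 24 :=
  stmt_16_general X hX
end

section
/- Let A be a unital Banach algebra over ℂ, let L_1, …, L_n ∈ A, let p_1, …, p_n ∈ (0,1] and let s > 0. Assume that for every u ≥ 0 and every j, ‖exp(u • ((1/p_j) • L_j))‖ ≤ 1. Then for every θ ∈ [0,1], the fourth derivative at θ of the function θ ↦ Σ_{b : Fin n → Bool} w(b) • ∏_{j=1}^{n} exp(s·θ • L̂_j(b)) has norm at most s⁴ ( Σ_j ‖L_j‖ / p_j )⁴. -/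
open NormedSpace

/-!
Fix a pattern `b` and put `N_j = s • L̂_j(b)`, so that the summand is `θ ↦ ∏_j exp (θ • N_j)`.
By the Leibniz rule its `k`-th derivative is a sum of products of the factors
`exp (θ • N_j) * N_j ^ k_j`; contractivity (`θ s ≥ 0`) bounds each exponential by `1`, and the
multinomial theorem collapses the bound to `(∑_j ‖N_j‖) ^ k ≤ (s ∑_j ‖L_j‖ / p_j) ^ k`.
The weights `w(b)` form a probability distribution, so the expectation obeys the same bound.
-/

section ListProd

variable {𝕜 E A : Type*} [NontriviallyNormedField 𝕜] [NormedAddCommGroup E] [NormedSpace 𝕜 E]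
  [NormedRing A] [NormedAlgebra 𝕜 A]

theorem contDiff_list_prod_ofFn {N : WithTop ℕ∞} {m : ℕ} {f : Fin m → E → A}
    (hf : ∀ i, ContDiff 𝕜 N (f i)) : ContDiff 𝕜 N fun y => (List.ofFn fun i => f i y).prod := by
  induction m with
  | zero => simpa using contDiff_const
  | succ m ih =>
    simpa only [List.ofFn_succ, List.prod_cons] using (hf 0).mul (ih fun i => hf i.succ)

theorem norm_iteratedFDeriv_list_prod_ofFn_le [NormOneClass A] {N : WithTop ℕ∞} {m n : ℕ}
    {f : Fin m → E → A} (hf : ∀ i, ContDiff 𝕜 N (f i)) (hn : n ≤ N) {x : E} {c : Fin m → ℝ}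
    (hc : ∀ i, ∀ k ≤ n, ‖iteratedFDeriv 𝕜 k (f i) x‖ ≤ c i ^ k) :
    ‖iteratedFDeriv 𝕜 n (fun y => (List.ofFn fun i => f i y).prod) x‖ ≤ (∑ i, c i) ^ n := by
  induction m generalizing n with
  | zero =>
    cases n with
    | zero => simp
    | succ n => simp [iteratedFDeriv_const_of_ne (n := n + 1) (by simp)]
  | succ m ih =>
    simp only [List.ofFn_succ, List.prod_cons, Fin.sum_univ_succ, add_pow]
    refine (norm_iteratedFDeriv_mul_le (hf 0) (contDiff_list_prod_ofFn fun i => hf i.succ) x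
      hn).trans (Finset.sum_le_sum fun k hk => ?_)
    have hk : k ≤ n := Nat.lt_succ_iff.1 (Finset.mem_range.1 hk)
    have hhead := hc 0 k hk
    have htail := ih (fun i => hf i.succ) ((Nat.cast_le.2 (n.sub_le k)).trans hn)
      fun i j hj => hc i.succ j (hj.trans (n.sub_le k))
    calc _ ≤ (n.choose k : ℝ) * c 0 ^ k * (∑ i : Fin m, c i.succ) ^ (n - k) := by
          have hc0 : 0 ≤ c 0 ^ k := (norm_nonneg _).trans hhead
          gcongr
      _ = _ := by ring

end ListProd

section ExpSmul

variable {𝕂 𝔸 : Type*} [RCLike 𝕂] [NormedRing 𝔸] [NormedAlgebra 𝕂 𝔸] [CompleteSpace 𝔸]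

theorem contDiff_exp_smul (N : WithTop ℕ∞) (x : 𝔸) : ContDiff 𝕂 N fun t : 𝕂 => exp (t • x) :=
  (contDiff_iff_contDiffAt.2 fun y => (exp_analytic (𝕂 := 𝕂) y).contDiffAt).comp
    (contDiff_id.smul contDiff_const)

theorem iteratedDeriv_exp_smul (x : 𝔸) (m : ℕ) :
    iteratedDeriv m (fun t : 𝕂 => exp (t • x)) = fun t => exp (t • x) * x ^ m := by
  induction m with
  | zero => simp
  | succ m ih =>
    funext t
    rw [iteratedDeriv_succ, ih, ((hasDerivAt_exp_smul_const x t).mul_const _).deriv, mul_assoc,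
      ← pow_succ']

theorem norm_iteratedFDeriv_exp_smul_le [NormOneClass 𝔸] {x : 𝔸} {t : 𝕂}
    (h : ‖exp (t • x)‖ ≤ 1) (m : ℕ) :
    ‖iteratedFDeriv 𝕂 m (fun t : 𝕂 => exp (t • x)) t‖ ≤ ‖x‖ ^ m := by
  rw [norm_iteratedFDeriv_eq_norm_iteratedDeriv, iteratedDeriv_exp_smul]
  calc ‖exp (t • x) * x ^ m‖ ≤ ‖exp (t • x)‖ * ‖x ^ m‖ := norm_mul_le _ _
    _ ≤ 1 * ‖x‖ ^ m := mul_le_mul h (norm_pow_le _ _) (norm_nonneg _) zero_le_one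
    _ = ‖x‖ ^ m := one_mul _

theorem norm_iteratedFDeriv_list_prod_exp_smul_le [NormOneClass 𝔸] {m : ℕ} (x : Fin m → 𝔸) {t : 𝕂}
    (h : ∀ i, ‖exp (t • x i)‖ ≤ 1) (n : ℕ) :
    ‖iteratedFDeriv 𝕂 n (fun t : 𝕂 => (List.ofFn fun i => exp (t • x i)).prod) t‖
      ≤ (∑ i, ‖x i‖) ^ n :=
  norm_iteratedFDeriv_list_prod_ofFn_le (fun i => contDiff_exp_smul n (x i)) le_rfl
    fun i k _ => norm_iteratedFDeriv_exp_smul_le (h i) k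

end ExpSmul


theorem norm_iteratedFDeriv_sum_smul_le {ι E F : Type*} [Fintype ι] [NormedAddCommGroup E]
    [NormedSpace ℝ E] [NormedAddCommGroup F] [NormedSpace ℝ F] {n : ℕ} {w : ι → ℝ}
    (hw : ∀ i, 0 ≤ w i) (hw_sum : ∑ i, w i = 1) {f : ι → E → F} (hf : ∀ i, ContDiff ℝ n (f i))
    {x : E} {M : ℝ} (hM : ∀ i, ‖iteratedFDeriv ℝ n (f i) x‖ ≤ M) :
    ‖iteratedFDeriv ℝ n (fun y => ∑ i, w i • f i y) x‖ ≤ M := by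
  rw [iteratedFDeriv_fun_sum_apply fun i _ => ((hf i).const_smul (w i)).contDiffAt]
  calc _ ≤ ∑ i, ‖iteratedFDeriv ℝ n (fun y => w i • f i y) x‖ := norm_sum_le _ _
    _ ≤ ∑ i, w i * M := Finset.sum_le_sum fun i _ => by
        rw [iteratedFDeriv_const_smul_apply' (hf i).contDiffAt, norm_smul,
          Real.norm_of_nonneg (hw i)]
        exact mul_le_mul_of_nonneg_left (hM i) (hw i)
    _ = M := by rw [← Finset.sum_mul, hw_sum, one_mul]

section Sparsification

variable {n : ℕ} {p : Fin n → ℝ}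

theorem sparWeight_nonneg (hp : ∀ j, p j ∈ Set.Icc (0 : ℝ) 1) (b : Fin n → Bool) :
    0 ≤ sparWeight p b :=
  Finset.prod_nonneg fun j _ => by
    cases b j
    · exact sub_nonneg.2 (hp j).2
    · exact (hp j).1

theorem sum_sparWeight (p : Fin n → ℝ) : ∑ b, sparWeight p b = 1 := by
  simp only [sparWeight, ← Fintype.prod_sum (fun j (c : Bool) => if c then p j else 1 - p j),
    Fintype.sum_bool]
  simp

variable {A : Type*} [NormedRing A] [NormedAlgebra ℂ A] (L : Fin n → A)

theorem norm_sparTerm_le (hp : ∀ j, 0 ≤ p j) (b : Fin n → Bool) (j : Fin n) :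
    ‖sparTerm L p b j‖ ≤ ‖L j‖ / p j := by
  unfold sparTerm
  split_ifs
  · rw [norm_smul, Real.norm_of_nonneg (one_div_nonneg.2 (hp j))]
    exact (one_div_mul_eq_div _ _).le
  · simpa using div_nonneg (norm_nonneg _) (hp j)

theorem norm_exp_smul_sparTerm_le_one [CompleteSpace A] [NormOneClass A] {u : ℝ}
    (h : ∀ j, ‖exp (u • ((1 / p j) • L j))‖ ≤ 1) (b : Fin n → Bool) (j : Fin n) :
    ‖exp (u • sparTerm L p b j)‖ ≤ 1 := by
  unfold sparTerm
  split_ifs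
  · exact h j
  · simp

end Sparsification

/-- The bound on the fourth derivative of the expected stochastic Trotter product
(Appendix A, equations 46–59): for `θ ∈ [0,1]`,
`‖d⁴/dθ⁴ E[∏_j exp(s·θ • L̂_j)]‖ ≤ s⁴ (Σ_j ‖L_j‖/p_j)⁴`. -/
theorem stmt_18 {A : Type*} [NormedRing A] [NormedAlgebra ℂ A]
    [CompleteSpace A] [NormOneClass A] (n : ℕ)
    (L : Fin n → A) (p : Fin n → ℝ) (hp : ∀ j, p j ∈ Set.Ioc (0 : ℝ) 1)
    (s : ℝ) (hs : 0 < s)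
    (hcon : ∀ u : ℝ, 0 ≤ u → ∀ j, ‖NormedSpace.exp (u • ((1 / p j) • L j))‖ ≤ 1) :
    ∀ θ ∈ Set.Icc (0 : ℝ) 1,
      ‖iteratedDeriv 4
          (fun θ : ℝ => ∑ b : Fin n → Bool, sparWeight p b •
            (List.ofFn fun j => NormedSpace.exp ((s * θ) • sparTerm L p b j)).prod) θ‖
        ≤ s ^ 4 * (∑ j : Fin n, ‖L j‖ / p j) ^ 4 := by
  intro θ hθ
  simp only [mul_comm s, mul_smul]
  rw [← norm_iteratedFDeriv_eq_norm_iteratedDeriv, ← mul_pow]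
  refine norm_iteratedFDeriv_sum_smul_le
    (sparWeight_nonneg fun j => Set.Ioc_subset_Icc_self (hp j)) (sum_sparWeight p)
    (fun b => contDiff_list_prod_ofFn fun j => contDiff_exp_smul _ _) fun b => ?_
  refine (norm_iteratedFDeriv_list_prod_exp_smul_le _ (fun j => ?_) 4).trans ?_
  · rw [smul_smul]
    exact norm_exp_smul_sparTerm_le_one L (hcon _ (mul_nonneg hθ.1 hs.le)) b j
  · gcongr
    simp only [norm_smul, Real.norm_of_nonneg hs.le, ← Finset.mul_sum]
    gcongr with j
    exact norm_sparTerm_le L (fun j => (hp j).1.le) b j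
end
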